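/- arXiv:math/0611130 — 3 statements merged into one kernel-verified Lean document; each statement's English description precedes it below -/
import Mathlib

section
/- Let μ be an atomless Borel probability measure on ℝ and μ^5 the product measure on (Fin 5 → ℝ), modeling five i.i.d. random numbers. Then the probability of the up-down-up-down pattern, μ^5 { x | x 0 < x 1 ∧ x 2 < x 1 ∧ x 2 < x 3 ∧ x 4 < x 3 }, equals 2/15. -/
/-!
Since μ is atomless, μ^n-almost every point has pairwise distinct coordinates, so up to a null
set the cube is the disjoint union of the n! cells `{x | StrictMono (x ∘ σ)}`. Permuting the
coordinates preserves μ^n and permutes the cells transitively, so each cell has mass 1/n!.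
The UDUD event is, up to a null set, the union of the cells of the 16 permutations whose inverse
is alternating (the Euler zigzag number of 5), whence the probability is 16/120 = 2/15.
-/

open MeasureTheory Set Equiv Function
open scoped ENNReal Nat

section Combinatorics

variable {α : Type*} [LinearOrder α] {n : ℕ}

def orderCell (σ : Perm (Fin n)) : Set (Fin n → α) := {x | StrictMono (x ∘ σ)}

variable {σ : Perm (Fin n)} {x : Fin n → α}

lemma eq_sort_of_mem_orderCell (hx : x ∈ orderCell σ) : σ = Tuple.sort x :=
  Tuple.eq_sort_iff.2 ⟨hx.monotone, fun _ _ hij heq => absurd heq (hx hij).ne⟩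

lemma pairwise_disjoint_orderCell :
    Pairwise (Disjoint on (orderCell : Perm (Fin n) → Set (Fin n → α))) := fun _ _ hστ =>
  disjoint_left.2 fun _ hσ hτ =>
    hστ ((eq_sort_of_mem_orderCell hσ).trans (eq_sort_of_mem_orderCell hτ).symm)

lemma mem_orderCell_sort (hx : Injective x) : x ∈ orderCell (Tuple.sort x) :=
  (Tuple.monotone_sort x).strictMono_of_injective (hx.comp (Equiv.injective _))

lemma lt_iff_lt_of_mem_orderCell (hx : x ∈ orderCell σ) (a b : Fin n) :
    x a < x b ↔ σ⁻¹ a < σ⁻¹ b := by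
  simpa using hx.lt_iff_lt (a := σ⁻¹ a) (b := σ⁻¹ b)

end Combinatorics

section Measure

variable {n : ℕ} {μ : Measure ℝ}

lemma measurableSet_orderCell (σ : Perm (Fin n)) :
    MeasurableSet (orderCell σ : Set (Fin n → ℝ)) := by
  simp only [orderCell, StrictMono, ofPred_forall]
  exact .iInter fun i => .iInter fun j => .iInter fun _ =>
    measurableSet_lt (measurable_pi_apply _) (measurable_pi_apply _)

lemma ae_apply_ne_apply [SigmaFinite μ] [NullSingletonClass μ] {i j : Fin (n + 1)}
    (hij : i ≠ j) : ∀ᵐ x ∂Measure.pi fun _ => μ, x i ≠ x j := by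
  obtain ⟨k, rfl⟩ := Fin.exists_succAbove_eq hij.symm
  have he := (measurePreserving_piFinSuccAbove (fun _ => μ) i).symm
  rw [← he.map_eq, MeasurableEquiv.measurableEmbedding _ |>.ae_map_iff]
  simp only [MeasurableEquiv.piFinSuccAbove, Fin.insertNthEquiv, symm_mk, MeasurableEquiv.symm_mk,
    MeasurableEquiv.coe_mk, coe_fn_mk, Fin.insertNth_apply_same, Fin.insertNth_apply_succAbove, ne_eq]
  have hS : MeasurableSet {p : ℝ × (Fin n → ℝ) | p.1 ≠ p.2 k} :=
    (measurableSet_eq_fun measurable_fst (by fun_prop)).compl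
  refine (Measure.ae_prod_iff_ae_ae hS).2 (.of_forall fun a => ?_)
  filter_upwards [Measure.ae_eval_ne _ k a] with y hy
  exact hy.symm

lemma ae_injective [SigmaFinite μ] [NullSingletonClass μ] :
    ∀ᵐ x ∂Measure.pi (fun _ : Fin n => μ), Injective x := by
  cases n with
  | zero => exact .of_forall fun x => injective_of_subsingleton x
  | succ n =>
    refine ae_all_iff.2 fun i => ae_all_iff.2 fun j => ?_
    rcases eq_or_ne i j with rfl | hij
    · exact .of_forall fun _ _ => rfl
    · filter_upwards [ae_apply_ne_apply hij] with x hx h using absurd h hx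

lemma ae_eq_biUnion_orderCell [SigmaFinite μ] [NullSingletonClass μ] {T : Set (Fin n → ℝ)}
    {S : Finset (Perm (Fin n))} (hT : ∀ σ, ∀ x ∈ orderCell σ, x ∈ T ↔ σ ∈ S) :
    T =ᵐ[Measure.pi fun _ => μ] ⋃ σ ∈ S, orderCell σ := by
  refine Filter.eventuallyEq_set.2 ?_
  filter_upwards [ae_injective] with x hx
  have hsort := mem_orderCell_sort hx
  simp only [mem_iUnion, exists_prop]
  refine (hT _ x hsort).trans ⟨fun h => ⟨_, h, hsort⟩, ?_⟩
  rintro ⟨σ, hσ, hx⟩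
  rwa [← eq_sort_of_mem_orderCell hx]

lemma measure_orderCell_eq_measure_orderCell_one [SigmaFinite μ] (σ : Perm (Fin n)) :
    Measure.pi (fun _ => μ) (orderCell σ) = Measure.pi (fun _ : Fin n => μ) (orderCell 1) := by
  have hσ := measurePreserving_arrowCongr' (fun _ => μ) (fun _ => μ) σ.symm
    (.refl ℝ) fun _ => .id μ
  rw [← hσ.measure_preimage (measurableSet_orderCell 1).nullMeasurableSet]
  rfl

lemma measure_biUnion_orderCell [SigmaFinite μ] (S : Finset (Perm (Fin n))) :
    Measure.pi (fun _ => μ) (⋃ σ ∈ S, orderCell σ) =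
      S.card * Measure.pi (fun _ : Fin n => μ) (orderCell 1) := by
  rw [measure_biUnion_finset (pairwise_disjoint_orderCell.set_pairwise _)
    fun σ _ => measurableSet_orderCell σ]
  simp [measure_orderCell_eq_measure_orderCell_one]

lemma measure_orderCell_one [IsProbabilityMeasure μ] [NullSingletonClass μ] :
    Measure.pi (fun _ : Fin n => μ) (orderCell 1) = (n ! : ℝ≥0∞)⁻¹ := by
  have h := measure_congr <| ae_eq_biUnion_orderCell (μ := μ) (n := n) (T := univ)
    (S := Finset.univ) fun _ _ _ => by simp
  rw [measure_univ, measure_biUnion_orderCell, Finset.card_univ, Fintype.card_perm,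
    Fintype.card_fin] at h
  exact ENNReal.eq_inv_of_mul_eq_one_left (by rw [mul_comm, ← h])

theorem measure_eq_card_div_factorial [IsProbabilityMeasure μ] [NullSingletonClass μ]
    {T : Set (Fin n → ℝ)} {S : Finset (Perm (Fin n))}
    (hT : ∀ σ, ∀ x ∈ orderCell σ, x ∈ T ↔ σ ∈ S) :
    Measure.pi (fun _ => μ) T = S.card / n ! := by
  rw [measure_congr (ae_eq_biUnion_orderCell hT), measure_biUnion_orderCell,
    measure_orderCell_one, div_eq_mul_inv]

end Measure

theorem udud_pattern_prob
    (μ : Measure ℝ) [IsProbabilityMeasure μ] [NullSingletonClass μ] :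
    (Measure.pi fun _ : Fin 5 => μ)
      {x | x 0 < x 1 ∧ x 2 < x 1 ∧ x 2 < x 3 ∧ x 4 < x 3} = 2 / 15 := by
  set S := Finset.univ.filter fun σ : Perm (Fin 5) =>
    σ⁻¹ 0 < σ⁻¹ 1 ∧ σ⁻¹ 2 < σ⁻¹ 1 ∧ σ⁻¹ 2 < σ⁻¹ 3 ∧ σ⁻¹ 4 < σ⁻¹ 3
  have hS : S.card = 16 := by decide
  rw [measure_eq_card_div_factorial (S := S) fun σ x hx => ?_, hS]
  · rw [ENNReal.div_eq_div_iff] <;> norm_num [Nat.factorial]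
  · simp [S, lt_iff_lt_of_mem_orderCell hx]
end

section
/- Let μ be an atomless Borel probability measure on ℝ and μ^9 the product measure on (Fin 9 → ℝ). Let A be the event that positions 1 and 7 are local maxima and no position strictly between them is a local maximum, and let B be the event that position 1 is a local maximum. Then μ^9(A) / μ^9(B) = 4/189; i.e. f_m(6) = 4/189. -/
namespace FmAux


def stA (k a b v : ℕ) : Bool :=
  if k = 1 then b < v else if k = 2 then v < b
  else if 3 ≤ k ∧ k ≤ 6 then !(a < b && v < b)
  else if k = 7 then b < v else if k = 8 then v < b else true

def stB (k a b v : ℕ) : Bool :=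
  if k = 1 then b < v else if k = 2 then v < b else true


def go (st : ℕ → ℕ → ℕ → ℕ → Bool) : ℕ → ℕ → ℕ → ℕ → List ℕ → ℕ
  | 0, _, _, _, _ => 1
  | (n+1), k, a, b, rem =>
      (rem.map fun v => if st k a b v then go st n (k+1) b v (rem.erase v) else 0).sum

def ok (st : ℕ → ℕ → ℕ → ℕ → Bool) : ℕ → ℕ → ℕ → List ℕ → Bool
  | _, _, _, [] => true
  | k, a, b, v :: w => st k a b v && ok st (k+1) b v w


theorem ok_cons (st : ℕ → ℕ → ℕ → ℕ → Bool) (k a b v : ℕ) (w : List ℕ) :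
    ok st k a b (v :: w) = (st k a b v && ok st (k+1) b v w) := rfl

theorem ok_nil (st : ℕ → ℕ → ℕ → ℕ → Bool) (k a b : ℕ) : ok st k a b [] = true := rfl

def permsL : ℕ → List ℕ → List (List ℕ)
  | 0, _ => [[]]
  | (n+1), rem => rem.flatMap fun v => (permsL n (rem.erase v)).map (v :: ·)

theorem mem_permsL {n : ℕ} : ∀ {rem : List ℕ}, rem.length = n →
    ∀ {w : List ℕ}, (w ∈ permsL n rem ↔ w.Perm rem) := by
  induction n with
  | zero => intro rem h w
            rw [List.length_eq_zero_iff] at h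
            subst h
            simp [permsL, List.perm_nil]
  | succ n ih =>
      intro rem h w
      simp only [permsL, List.mem_flatMap, List.mem_map]
      constructor
      · rintro ⟨v, hv, u, hu, rfl⟩
        have hlen : (rem.erase v).length = n := by
          rw [List.length_erase_of_mem hv, h]; rfl
        exact List.cons_perm_iff_perm_erase.2 ⟨hv, (ih hlen).1 hu⟩
      · intro hw
        match w with
        | [] => exact absurd (hw.length_eq) (by simp [h])
        | v :: u =>
          obtain ⟨hv, hu⟩ := List.cons_perm_iff_perm_erase.1 hw
          have hlen : (rem.erase v).length = n := by
            rw [List.length_erase_of_mem hv, h]; rfl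
          exact ⟨v, hv, u, (ih hlen).2 hu, rfl⟩

theorem nodup_permsL {n : ℕ} : ∀ {rem : List ℕ}, rem.length = n → rem.Nodup →
    (permsL n rem).Nodup := by
  induction n with
  | zero => intro rem h _; simp [permsL]
  | succ n ih =>
      intro rem h hnd
      rw [permsL, List.nodup_flatMap]
      refine ⟨fun v hv => ?_, ?_⟩
      · exact ((ih (by rw [List.length_erase_of_mem hv, h]; rfl) (hnd.erase v)).map
          (fun a b hab => by injection hab))
      · -- pairwise disjoint
        refine List.Pairwise.imp ?_ hnd
        intro a b hab
        simp only [Function.onFun, List.disjoint_left]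
        rintro w hwa hwb
        obtain ⟨u, _, rfl⟩ := List.mem_map.1 hwa
        obtain ⟨u', _, h2⟩ := List.mem_map.1 hwb
        injection h2 with h3 _
        exact hab h3.symm

theorem go_eq_countP (st : ℕ → ℕ → ℕ → ℕ → Bool) {n : ℕ} :
    ∀ {rem : List ℕ}, rem.length = n → ∀ (k a b : ℕ),
      go st n k a b rem = (permsL n rem).countP (ok st k a b) := by
  induction n with
  | zero => intro rem h k a b
            rw [List.length_eq_zero_iff] at h; subst h
            simp [go, permsL, List.countP_cons, ok]
  | succ n ih =>
      intro rem h k a b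
      rw [go, permsL, List.countP_flatMap]
      rw [List.map_congr_left (f := fun v => if st k a b v then go st n (k+1) b v (rem.erase v) else 0)
        (g := fun v => ((permsL n (rem.erase v)).map (v :: ·)).countP (ok st k a b)) ?_]
      · rfl
      · intro v hv
        have hlen : (rem.erase v).length = n := by
          rw [List.length_erase_of_mem hv, h]; rfl
        rw [List.countP_map]
        have : ((ok st k a b) ∘ (v :: ·)) = fun u => st k a b v && ok st (k+1) b v u := by
          funext u; simp [ok, Function.comp]
        rw [this]
        cases hst : st k a b v with
        | true => simp only [if_true, Bool.true_and]; exact ih hlen (k+1) b v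
        | false => simp [hst]



def go' (st : ℕ → ℕ → ℕ → ℕ → Bool) (K : ℕ) : ℕ → ℕ → ℕ → ℕ → List ℕ → ℕ
  | 0, _, _, _, _ => 1
  | (n+1), k, a, b, rem =>
      if K ≤ k then (n+1).factorial else
      (rem.map fun v => if st k a b v then go' st K n (k+1) b v (rem.erase v) else 0).sum

theorem go_of_true {st : ℕ → ℕ → ℕ → ℕ → Bool} {K : ℕ}
    (hst : ∀ k a b v, K ≤ k → st k a b v = true) :
    ∀ (n : ℕ) {rem : List ℕ} (k a b : ℕ), K ≤ k → rem.length = n →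
      go st n k a b rem = n.factorial := by
  intro n
  induction n with
  | zero => intro rem k a b _ _; simp [go, Nat.factorial]
  | succ n ih =>
      intro rem k a b hk hlen
      rw [go]
      rw [List.map_congr_left (g := fun _ => n.factorial) ?_]
      · rw [List.map_const', List.sum_replicate, smul_eq_mul, hlen, Nat.factorial_succ]
      · intro v hv
        have h1 : st k a b v = true := hst k a b v hk
        have h2 := ih (k+1) b v (le_trans hk (Nat.le_succ k))
          (by rw [List.length_erase_of_mem hv, hlen]; rfl)
        simp [h1, h2]

theorem go'_eq {st : ℕ → ℕ → ℕ → ℕ → Bool} {K : ℕ}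
    (hst : ∀ k a b v, K ≤ k → st k a b v = true) :
    ∀ (n : ℕ) {rem : List ℕ} (k a b : ℕ), rem.length = n →
      go' st K n k a b rem = go st n k a b rem := by
  intro n
  induction n with
  | zero => intro rem k a b _; rfl
  | succ n ih =>
      intro rem k a b hlen
      rw [go', go]
      by_cases hk : K ≤ k
      · rw [if_pos hk, ← go_of_true hst (n+1) k a b hk hlen, go]
      · rw [if_neg hk]
        congr 1
        refine List.map_congr_left fun v hv => ?_
        cases hst' : st k a b v with
        | true => simp only [if_true]
                  exact (ih (k+1) b v (by rw [List.length_erase_of_mem hv, hlen]; rfl)).symm ▸ rfl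
        | false => rfl

def listOf (τ : Equiv.Perm (Fin 9)) : List ℕ :=
  [τ 0, τ 1, τ 2, τ 3, τ 4, τ 5, τ 6, τ 7, τ 8]

theorem listOf_perm_range (τ : Equiv.Perm (Fin 9)) : (listOf τ).Perm (List.range 9) := by
  have hbase : ([0,1,2,3,4,5,6,7,8] : List (Fin 9)).Nodup := by decide
  have heq : listOf τ = ([0,1,2,3,4,5,6,7,8] : List (Fin 9)).map (fun i => ((τ i : Fin 9) : ℕ)) := rfl
  have hnd : (listOf τ).Nodup := by
    rw [heq]
    exact hbase.map (Fin.val_injective.comp τ.injective)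
  refine List.perm_of_nodup_nodup_toFinset_eq hnd (List.nodup_range (n := 9)) ?_
  ext m
  simp only [List.mem_toFinset, List.mem_range]
  constructor
  · intro h
    simp only [listOf, List.mem_cons, List.not_mem_nil, or_false] at h
    rcases h with rfl | rfl | rfl | rfl | rfl | rfl | rfl | rfl | rfl <;> exact Fin.is_lt _
  · intro hm
    obtain ⟨i, hi⟩ := τ.surjective ⟨m, hm⟩
    have hmi : m = (τ i : ℕ) := by rw [hi]
    fin_cases i <;> simp [hmi, listOf]

theorem listOf_injective : Function.Injective listOf := by
  intro τ τ' h
  simp only [listOf, List.cons.injEq, and_true] at h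
  obtain ⟨h0, h1, h2, h3, h4, h5, h6, h7, h8⟩ := h
  ext i
  fin_cases i <;> simp_all [Fin.val_injective.eq_iff]

theorem card_filter_eq_countP (p : List ℕ → Bool) :
    (Finset.univ.filter fun τ : Equiv.Perm (Fin 9) => p (listOf τ)).card
      = (permsL 9 (List.range 9)).countP p := by
  have hlen : (List.range 9).length = 9 := by simp
  rw [List.countP_eq_length_filter]
  have hnodup : ((permsL 9 (List.range 9)).filter p).Nodup :=
    (nodup_permsL hlen (List.nodup_range (n := 9))).filter p
  rw [← List.toFinset_card_of_nodup hnodup]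
  refine Finset.card_bij (fun τ _ => listOf τ) ?_ ?_ ?_
  · intro τ hτ
    simp only [Finset.mem_filter, Finset.mem_univ, true_and] at hτ
    simp only [List.mem_toFinset, List.mem_filter]
    exact ⟨(mem_permsL hlen).2 (listOf_perm_range τ), hτ⟩
  · intro τ1 _ τ2 _ h
    exact listOf_injective h
  · intro w hw
    simp only [List.mem_toFinset, List.mem_filter] at hw
    obtain ⟨hw1, hw2⟩ := hw
    have hwperm : w.Perm (List.range 9) := (mem_permsL hlen).1 hw1
    
    have hwlen : w.length = 9 := by rw [hwperm.length_eq, hlen]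
    have hwnd : w.Nodup := hwperm.nodup_iff.2 (List.nodup_range (n := 9))
    have hmem : ∀ i : ℕ, (h : i < 9) → w[i]'(by omega) < 9 := by
      intro i h
      have : w[i]'(by omega) ∈ w := List.getElem_mem _
      have := hwperm.mem_iff.1 this
      simpa using List.mem_range.1 this
    set f : Fin 9 → Fin 9 := fun i => ⟨w[(i : ℕ)]'(by omega), hmem i i.isLt⟩ with hf
    have hinj : Function.Injective f := by
      intro i j hij
      have : w[(i:ℕ)]'(by omega) = w[(j:ℕ)]'(by omega) := congrArg Fin.val hij
      have := (List.Nodup.getElem_inj_iff hwnd).1 this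
      exact Fin.ext this
    have hbij : Function.Bijective f := Finite.injective_iff_bijective.1 hinj
    refine ⟨Equiv.ofBijective f hbij, Finset.mem_filter.2 ⟨Finset.mem_univ _, ?_⟩, ?_⟩
    · have : listOf (Equiv.ofBijective f hbij) = w := by
        refine List.ext_getElem (by simp [listOf, hwlen]) ?_
        intro i h1 h2
        have h9 : i < 9 := by simpa [listOf] using h1
        interval_cases i <;> rfl
      rw [this]; exact hw2
    · refine List.ext_getElem (by simp [listOf, hwlen]) ?_
      intro i h1 h2
      have h9 : i < 9 := by simpa [listOf] using h1
      interval_cases i <;> rfl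


def PA (τ : Equiv.Perm (Fin 9)) : Prop :=
  τ 0 < τ 1 ∧ τ 2 < τ 1 ∧ τ 6 < τ 7 ∧ τ 8 < τ 7 ∧
  ¬(τ 1 < τ 2 ∧ τ 3 < τ 2) ∧ ¬(τ 2 < τ 3 ∧ τ 4 < τ 3) ∧
  ¬(τ 3 < τ 4 ∧ τ 5 < τ 4) ∧ ¬(τ 4 < τ 5 ∧ τ 6 < τ 5) ∧ ¬(τ 5 < τ 6 ∧ τ 7 < τ 6)

def PB (τ : Equiv.Perm (Fin 9)) : Prop := τ 0 < τ 1 ∧ τ 2 < τ 1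

instance : DecidablePred PA := fun τ => by unfold PA; infer_instance
instance : DecidablePred PB := fun τ => by unfold PB; infer_instance

theorem PA_iff_ok (τ : Equiv.Perm (Fin 9)) : PA τ ↔ ok stA 0 0 0 (listOf τ) = true := by
  rw [PA, listOf]
  simp only [ok_cons, ok_nil, Nat.reduceAdd]
  simp only [stA]
  norm_num
  try omega

theorem PB_iff_ok (τ : Equiv.Perm (Fin 9)) : PB τ ↔ ok stB 0 0 0 (listOf τ) = true := by
  rw [PB, listOf]
  simp only [ok_cons, ok_nil, Nat.reduceAdd]
  simp only [stB]
  norm_num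
  try omega

theorem countA : (Finset.univ.filter PA).card = 2560 := by
  rw [Finset.filter_congr (fun τ _ => PA_iff_ok τ)]
  rw [card_filter_eq_countP (ok stA 0 0 0)]
  rw [← go_eq_countP stA (by simp) 0 0 0]
  decide

theorem stB_true : ∀ k a b v : ℕ, 3 ≤ k → stB k a b v = true := by
  intro k a b v hk
  rw [stB, if_neg (by omega), if_neg (by omega)]

theorem countB : (Finset.univ.filter PB).card = 120960 := by
  rw [Finset.filter_congr (fun τ _ => PB_iff_ok τ)]
  rw [card_filter_eq_countP (ok stB 0 0 0)]
  rw [← go_eq_countP stB (by simp) 0 0 0]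
  rw [← go'_eq stB_true 9 0 0 0 (by simp)]
  decide

/-! ## Measure theory -/

open MeasureTheory ENNReal

section Measure

variable (μ : Measure ℝ) [IsProbabilityMeasure μ] [NullSingletonClass μ]

theorem null_pair (p q : Fin 9) (hpq : p ≠ q) :
    Measure.pi (fun _ : Fin 9 => μ) {x | x p = x q} = 0 := by
  obtain ⟨j, hj⟩ := Fin.exists_succAbove_eq (show q ≠ p from hpq.symm)
  have e := measurePreserving_piFinSuccAbove (fun _ : Fin 9 => μ) p
  set T : Set (ℝ × (Fin 8 → ℝ)) := {y | y.1 = y.2 j} with hT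
  have hTm : MeasurableSet T :=
    measurableSet_eq_fun measurable_fst ((measurable_pi_apply j).comp measurable_snd)
  have hpre : {x : Fin 9 → ℝ | x p = x q}
      = (MeasurableEquiv.piFinSuccAbove (fun _ : Fin 9 => ℝ) p) ⁻¹' T := by
    ext x
    simp [T, MeasurableEquiv.piFinSuccAbove, Fin.insertNthEquiv, Fin.removeNth, hj]
  rw [hpre, e.measure_preimage hTm.nullMeasurableSet, Measure.prod_apply hTm]
  have hz : ∀ c : ℝ, (Measure.pi fun _ : Fin 8 => μ) (Prod.mk c ⁻¹' T) = 0 := by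
    intro c
    have : (Prod.mk c ⁻¹' T) = {z : Fin 8 → ℝ | z j = c} := by ext z; simp [T, eq_comm]
    rw [this]
    exact Measure.pi_hyperplane (fun _ : Fin 8 => μ) j c
  simp [hz]

theorem null_noninj :
    Measure.pi (fun _ : Fin 9 => μ) {x | ¬ Function.Injective x} = 0 := by
  have hnull : ∀ pq : Fin 9 × Fin 9,
      Measure.pi (fun _ : Fin 9 => μ) {x : Fin 9 → ℝ | pq.1 ≠ pq.2 ∧ x pq.1 = x pq.2} = 0 := by
    intro pq
    by_cases h : pq.1 ≠ pq.2
    · exact measure_mono_null (fun x hx => hx.2) (null_pair μ pq.1 pq.2 h)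
    · have he : {x : Fin 9 → ℝ | pq.1 ≠ pq.2 ∧ x pq.1 = x pq.2} = ∅ := by
        ext x; simp only [Set.mem_setOf_eq, Set.mem_empty_iff_false, iff_false]
        intro hc; exact h hc.1
      rw [he]; exact measure_empty
  refine measure_mono_null ?_ (measure_iUnion_null hnull)
  intro x hx
  simp only [Set.mem_setOf_eq, Function.Injective, not_forall] at hx
  obtain ⟨p, q, hxy, hne⟩ := hx
  exact Set.mem_iUnion.2 ⟨(p, q), hne, hxy⟩

def Fset (τ : Equiv.Perm (Fin 9)) : Set (Fin 9 → ℝ) :=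
  {x | ∀ p q : Fin 9, τ p < τ q → x p < x q}

theorem measurable_Fset (τ : Equiv.Perm (Fin 9)) : MeasurableSet (Fset τ) := by
  have : Fset τ = ⋂ (p : Fin 9) (q : Fin 9), {x : Fin 9 → ℝ | τ p < τ q → x p < x q} := by
    ext x; simp [Fset]
  rw [this]
  refine MeasurableSet.iInter fun p => MeasurableSet.iInter fun q => ?_
  by_cases h : τ p < τ q
  · have : {x : Fin 9 → ℝ | τ p < τ q → x p < x q} = {x | x p < x q} := by ext x; simp [h]
    rw [this]
    exact measurableSet_lt (measurable_pi_apply p) (measurable_pi_apply q)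
  · have : {x : Fin 9 → ℝ | τ p < τ q → x p < x q} = Set.univ := by ext x; simp [h]
    rw [this]
    exact MeasurableSet.univ

theorem Fset_iff {τ : Equiv.Perm (Fin 9)} {x : Fin 9 → ℝ} (hx : x ∈ Fset τ) :
    ∀ p q : Fin 9, x p < x q ↔ τ p < τ q := by
  intro p q
  constructor
  · intro h
    rcases lt_trichotomy (τ p) (τ q) with h' | h' | h'
    · exact h'
    · have := τ.injective h'
      subst this
      exact absurd h (lt_irrefl _)
    · exact absurd (hx q p h') (asymm h)
  · exact hx p q

theorem Fset_inj {τ : Equiv.Perm (Fin 9)} {x : Fin 9 → ℝ} (hx : x ∈ Fset τ) :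
    Function.Injective x := by
  intro p q h
  by_contra hne
  rcases (τ.injective.ne hne).lt_or_gt with h' | h'
  · exact absurd h (hx p q h').ne
  · exact absurd h.symm (hx q p h').ne

theorem Fset_disjoint : Pairwise (Function.onFun Disjoint (Fset)) := by
  intro τ τ' hne
  rw [Function.onFun, Set.disjoint_left]
  intro x hx hx'
  apply hne
  have hiff : ∀ p q : Fin 9, τ p < τ q ↔ τ' p < τ' q :=
    fun p q => (Fset_iff hx p q).symm.trans (Fset_iff hx' p q)
  have hsm : StrictMono (fun r => τ' (τ.symm r)) := by
    intro r s hrs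
    exact (hiff (τ.symm r) (τ.symm s)).1 (by simpa using hrs)
  have hrange : Set.range (fun r => τ' (τ.symm r)) = Set.range (id : Fin 9 → Fin 9) := by
    rw [Set.range_id]
    exact Set.range_eq_univ.2 fun y => ⟨τ (τ'.symm y), by simp⟩
  have h3 := (hsm.range_inj strictMono_id).1 hrange
  exact Equiv.ext fun a => by simpa using (congrFun h3 (τ a)).symm

theorem inj_sub_union {x : Fin 9 → ℝ} (hx : Function.Injective x) :
    x ∈ ⋃ τ : Equiv.Perm (Fin 9), Fset τ := by
  set σ := Tuple.sort x with hσ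
  have hmono : Monotone (x ∘ σ) := Tuple.monotone_sort x
  have hsm : StrictMono (x ∘ σ) := hmono.strictMono_of_injective (hx.comp σ.injective)
  refine Set.mem_iUnion.2 ⟨σ⁻¹, fun p q h => ?_⟩
  have := hsm h
  simpa using this

theorem measure_Fset (τ : Equiv.Perm (Fin 9)) :
    Measure.pi (fun _ : Fin 9 => μ) (Fset τ) = Measure.pi (fun _ : Fin 9 => μ) (Fset 1) := by
  have e := measurePreserving_piCongrLeft (fun _ : Fin 9 => μ) (τ : Fin 9 ≃ Fin 9)
  have hcoe : ∀ (x : Fin 9 → ℝ) (b : Fin 9),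
      (MeasurableEquiv.piCongrLeft (fun _ : Fin 9 => ℝ) (τ : Fin 9 ≃ Fin 9)) x b
        = x (τ.symm b) := by
    intro x b
    simp [MeasurableEquiv.coe_piCongrLeft, Equiv.piCongrLeft_apply, eq_rec_constant]
  have hpre : (MeasurableEquiv.piCongrLeft (fun _ : Fin 9 => ℝ) (τ : Fin 9 ≃ Fin 9)) ⁻¹' (Fset 1)
      = Fset τ := by
    ext x
    simp only [Set.mem_preimage, Fset, Set.mem_setOf_eq, hcoe]
    constructor
    · intro h p q hpq
      have := h (τ p) (τ q) (by simpa using hpq)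
      simpa using this
    · intro h p q hpq
      have : τ (τ.symm p) < τ (τ.symm q) := by simpa using hpq
      exact h (τ.symm p) (τ.symm q) this
  rw [← hpre, e.measure_preimage (measurable_Fset 1).nullMeasurableSet]

theorem measure_Fset_one :
    Measure.pi (fun _ : Fin 9 => μ) (Fset 1) = (362880 : ℝ≥0∞)⁻¹ := by
  have hcard : (Fintype.card (Equiv.Perm (Fin 9)) : ℝ≥0∞) = 362880 := by
    rw [Fintype.card_perm, Fintype.card_fin]
    norm_num [Nat.factorial]
  have hU : Measure.pi (fun _ : Fin 9 => μ) (⋃ τ : Equiv.Perm (Fin 9), Fset τ)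
      = ∑' τ : Equiv.Perm (Fin 9), Measure.pi (fun _ : Fin 9 => μ) (Fset τ) :=
    measure_iUnion Fset_disjoint measurable_Fset
  have hU1 : Measure.pi (fun _ : Fin 9 => μ) (⋃ τ : Equiv.Perm (Fin 9), Fset τ) = 1 := by
    refine le_antisymm prob_le_one ?_
    have hcover : (Set.univ : Set (Fin 9 → ℝ)) ⊆
        (⋃ τ : Equiv.Perm (Fin 9), Fset τ) ∪ {x | ¬ Function.Injective x} := by
      intro x _
      by_cases hx : Function.Injective x
      · exact Or.inl (inj_sub_union hx)
      · exact Or.inr hx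
    calc (1 : ℝ≥0∞) = Measure.pi (fun _ : Fin 9 => μ) Set.univ := measure_univ.symm
    _ ≤ Measure.pi (fun _ : Fin 9 => μ)
        ((⋃ τ : Equiv.Perm (Fin 9), Fset τ) ∪ {x | ¬ Function.Injective x}) :=
      measure_mono hcover
    _ ≤ Measure.pi (fun _ : Fin 9 => μ) (⋃ τ : Equiv.Perm (Fin 9), Fset τ)
        + Measure.pi (fun _ : Fin 9 => μ) {x | ¬ Function.Injective x} := measure_union_le _ _
    _ = Measure.pi (fun _ : Fin 9 => μ) (⋃ τ : Equiv.Perm (Fin 9), Fset τ) := by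
      rw [null_noninj μ, add_zero]
  have hsum : (362880 : ℝ≥0∞) * Measure.pi (fun _ : Fin 9 => μ) (Fset 1) = 1 := by
    rw [← hU1, hU, tsum_fintype]
    rw [Finset.sum_congr rfl (fun τ _ => measure_Fset μ τ)]
    rw [Finset.sum_const, Finset.card_univ, nsmul_eq_mul, hcard]
  have h := ENNReal.eq_inv_of_mul_eq_one_left hsum
  rw [h, inv_inv]

theorem measure_eq_card (S : Set (Fin 9 → ℝ)) (P : Equiv.Perm (Fin 9) → Prop) [DecidablePred P]
    (h : ∀ (τ : Equiv.Perm (Fin 9)) (x : Fin 9 → ℝ),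
      (∀ p q : Fin 9, x p < x q ↔ τ p < τ q) → (x ∈ S ↔ P τ)) :
    Measure.pi (fun _ : Fin 9 => μ) S
      = ((Finset.univ.filter P).card : ℝ≥0∞) * (362880 : ℝ≥0∞)⁻¹ := by
  set U : Set (Fin 9 → ℝ) := ⋃ τ ∈ Finset.univ.filter P, Fset τ with hUdef
  have hUS : U ⊆ S := by
    intro x hx
    simp only [hUdef, Set.mem_iUnion] at hx
    obtain ⟨τ, hτ, hxF⟩ := hx
    exact (h τ x (Fset_iff hxF)).2 (Finset.mem_filter.1 hτ).2
  have hSU : S ⊆ U ∪ {x | ¬ Function.Injective x} := by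
    intro x hxS
    by_cases hx : Function.Injective x
    · obtain ⟨τ, hτ⟩ := Set.mem_iUnion.1 (inj_sub_union hx)
      refine Or.inl ?_
      simp only [hUdef, Set.mem_iUnion]
      exact ⟨τ, Finset.mem_filter.2 ⟨Finset.mem_univ _, (h τ x (Fset_iff hτ)).1 hxS⟩, hτ⟩
    · exact Or.inr hx
  have hmU : Measure.pi (fun _ : Fin 9 => μ) U
      = ((Finset.univ.filter P).card : ℝ≥0∞) * (362880 : ℝ≥0∞)⁻¹ := by
    rw [hUdef, measure_biUnion_finset
      (fun τ₁ _ τ₂ _ hne => Fset_disjoint hne) (fun τ _ => measurable_Fset τ)]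
    rw [Finset.sum_congr rfl (fun τ _ => (measure_Fset μ τ).trans (measure_Fset_one μ))]
    rw [Finset.sum_const, nsmul_eq_mul]
  refine le_antisymm ?_ ?_ |>.trans hmU
  · calc Measure.pi (fun _ : Fin 9 => μ) S
        ≤ Measure.pi (fun _ : Fin 9 => μ) (U ∪ {x | ¬ Function.Injective x}) :=
      measure_mono hSU
    _ ≤ Measure.pi (fun _ : Fin 9 => μ) U
        + Measure.pi (fun _ : Fin 9 => μ) {x | ¬ Function.Injective x} := measure_union_le _ _
    _ = Measure.pi (fun _ : Fin 9 => μ) U := by rw [null_noninj μ, add_zero]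
  · exact measure_mono hUS

end Measure

end FmAux

open MeasureTheory

open scoped ENNReal in
theorem fm_six_eq_four_over_189
    (μ : Measure ℝ) [IsProbabilityMeasure μ] [NullSingletonClass μ] :
    (Measure.pi fun _ : Fin 9 => μ)
        {x | x 0 < x 1 ∧ x 2 < x 1 ∧ x 6 < x 7 ∧ x 8 < x 7 ∧
             ¬(x 1 < x 2 ∧ x 3 < x 2) ∧ ¬(x 2 < x 3 ∧ x 4 < x 3) ∧
             ¬(x 3 < x 4 ∧ x 5 < x 4) ∧ ¬(x 4 < x 5 ∧ x 6 < x 5) ∧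
             ¬(x 5 < x 6 ∧ x 7 < x 6)} /
      (Measure.pi fun _ : Fin 9 => μ) {x | x 0 < x 1 ∧ x 2 < x 1} = 4 / 189 := by
  have hA := FmAux.measure_eq_card μ
    {x : Fin 9 → ℝ | x 0 < x 1 ∧ x 2 < x 1 ∧ x 6 < x 7 ∧ x 8 < x 7 ∧
      ¬(x 1 < x 2 ∧ x 3 < x 2) ∧ ¬(x 2 < x 3 ∧ x 4 < x 3) ∧
      ¬(x 3 < x 4 ∧ x 5 < x 4) ∧ ¬(x 4 < x 5 ∧ x 6 < x 5) ∧ ¬(x 5 < x 6 ∧ x 7 < x 6)}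
    FmAux.PA (fun τ x hx => by simp only [Set.mem_setOf_eq, hx, FmAux.PA])
  have hB := FmAux.measure_eq_card μ
    {x : Fin 9 → ℝ | x 0 < x 1 ∧ x 2 < x 1}
    FmAux.PB (fun τ x hx => by simp only [Set.mem_setOf_eq, hx, FmAux.PB])
  rw [hA, hB, FmAux.countA, FmAux.countB]
  have h1 : ((2560 : ℕ) : ℝ≥0∞) = 2560 := by norm_num
  have h2 : ((120960 : ℕ) : ℝ≥0∞) = 120960 := by norm_num
  rw [h1, h2, ENNReal.mul_div_mul_right _ _ (by simp) (by simp)]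
  rw [ENNReal.div_eq_div_iff (by norm_num) (by norm_num) (by norm_num) (by norm_num)]
  norm_num
end

section
/- The series ∑_{d=2}^{∞} 3 · 2^d · (d-1) · (d+2) / (d+3)! converges and its sum equals 1; i.e. the probability mass function f_m(d) = 3 · 2^d (d-1)(d+2)/(d+3)! on distances d ≥ 2 sums to 1. -/
/-! The summand at `n` is `f_m(d)` for `d = n + 2`, and it equals `T n - T (n + 1)` where
`T n = 3 d 2^d / (d + 2)!` is the tail probability `P(D ≥ d)` (`fmTail`). The series therefore
telescopes to `T 0 = 1`, since `T n ≤ 12 · 2^n / n!` tends to `0`. -/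

open Filter Topology Nat

theorem hasSum_sub_succ_of_antitone {F : ℕ → ℝ} {a : ℝ} (hF : Antitone F)
    (h : Tendsto F atTop (𝓝 a)) : HasSum (fun n => F n - F (n + 1)) (F 0 - a) := by
  rw [hasSum_iff_tendsto_nat_of_nonneg fun n => sub_nonneg.2 (hF n.le_succ)]
  simp_rw [Finset.sum_range_sub']
  exact h.const_sub _

noncomputable def fmTail (n : ℕ) : ℝ := 3 * ((n : ℝ) + 2) * 2 ^ (n + 2) / (n + 4)!

lemma fmTail_zero : fmTail 0 = 1 := by
  norm_num [fmTail, Nat.factorial]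

lemma fm_eq_fmTail_sub_fmTail_succ (n : ℕ) :
    3 * 2 ^ (n + 2) * ((n : ℝ) + 1) * ((n : ℝ) + 4) / (n + 5)! = fmTail n - fmTail (n + 1) := by
  have hfact : ((n + 5)! : ℝ) = ((n : ℝ) + 5) * (n + 4)! := by
    push_cast [Nat.factorial_succ (n + 4)]; ring
  rw [fmTail, fmTail, show n + 1 + 4 = n + 5 by ring, hfact]
  field_simp
  push_cast
  ring

lemma fmTail_le (n : ℕ) : fmTail n ≤ 12 * (2 ^ n / n !) := by
  have hfact : (n + 2) * n ! ≤ (n + 4)! :=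
    calc (n + 2) * n ! ≤ (n + 2) * (n + 1)! := Nat.mul_le_mul_left _ (Nat.factorial_le n.le_succ)
      _ = (n + 2)! := (Nat.factorial_succ (n + 1)).symm
      _ ≤ (n + 4)! := Nat.factorial_le (by omega)
  have hfact' : ((n : ℝ) + 2) * n ! ≤ (n + 4)! := by exact_mod_cast hfact
  rw [fmTail, div_le_iff₀ (by positivity)]
  calc 3 * ((n : ℝ) + 2) * 2 ^ (n + 2) = 12 * (2 ^ n / n !) * (((n : ℝ) + 2) * n !) := by
        field_simp; ring
    _ ≤ 12 * (2 ^ n / n !) * (n + 4)! := by gcongr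

lemma tendsto_fmTail : Tendsto fmTail atTop (𝓝 0) := by
  have h := (FloorSemiring.tendsto_pow_div_factorial_atTop (K := ℝ) 2).const_mul 12
  rw [mul_zero] at h
  exact squeeze_zero (fun n => by unfold fmTail; positivity) fmTail_le h

theorem fm_sums_to_one :
    HasSum (fun n : ℕ =>
      (3 * 2 ^ (n + 2) * ((n : ℝ) + 1) * ((n : ℝ) + 4)) / (Nat.factorial (n + 5)))
      1 := by
  have hanti : Antitone fmTail := antitone_nat_of_succ_le fun n =>
    sub_nonneg.1 (fm_eq_fmTail_sub_fmTail_succ n ▸ by positivity)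
  simpa [fm_eq_fmTail_sub_fmTail_succ, fmTail_zero] using
    hasSum_sub_succ_of_antitone hanti tendsto_fmTail
end
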